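/- arXiv:2412.17780 — 3 statements merged into one kernel-verified Lean document; each statement's English description precedes it below -/
import Mathlib

section
/- Let V be a finite vocabulary containing a mask token m and a clean token x0 ≠ m, let a ∈ (0,1), and let π : V → [0,1] be a probability vector with π(m) = 0 and π(x0) > 0. Let q be the probability distribution on V assigning mass a to x0 and 1 − a to m, and let p be the probability distribution assigning mass a·π(e) to each e ≠ m and mass 1 − a to m. Then the Kullback–Leibler divergence satisfies KL(q ‖ p) = −a·log π(x0). In particular, with a = 1 − s^w/t^w (for 0 < s < t ≤ 1 and real w ≥ 1), the per-token diffusion KL term of the bond-dependent masked diffusion model equals −(1 − s^w/t^w)·log π(x0). -/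
/-! Outside `{x0, m}` the summands vanish because `q` does. At the mask token the ratio is
`(1 - a)/(1 - a)`, whose logarithm is `0`. At `x0` the factor `a` cancels from `a/(a·π(x0))`.
This leaves `a·log π(x0)⁻¹ = -a·log π(x0)`. -/

lemma Real.mul_log_div_mul_self (a b : ℝ) : a * Real.log (a / (a * b)) = -a * Real.log b := by
  rcases eq_or_ne a 0 with rfl | ha
  · simp
  · rw [div_mul_cancel_left₀ ha, Real.log_inv]
    ring

lemma sum_mul_log_div_eq_of_masked {V : Type*} [Fintype V] [DecidableEq V] (x0 m : V) (hxm : x0 ≠ m)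
    (a : ℝ) (π q p : V → ℝ)
    (hq : ∀ e, q e = if e = x0 then a else if e = m then 1 - a else 0)
    (hp : ∀ e, e ≠ m → p e = a * π e) (hpm : p m = 1 - a) :
    ∑ e, q e * Real.log (q e / p e) = -a * Real.log (π x0) := by
  have hq_off : ∀ e, e ≠ x0 ∧ e ≠ m → q e * Real.log (q e / p e) = 0 := fun e he => by
    simp [hq e, he.1, he.2]
  rw [Fintype.sum_eq_add x0 m hxm hq_off, hq x0, hq m, if_pos rfl, if_neg hxm.symm, if_pos rfl,
    hp x0 hxm, hpm, Real.log_div_self, mul_zero, add_zero, Real.mul_log_div_mul_self]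

theorem stmt_4_general {V : Type*} [Fintype V] [DecidableEq V] (x0 m : V) (hxm : x0 ≠ m)
    (a : ℝ)
    (π : V → ℝ)
    (q : V → ℝ)
    (hq : ∀ e, q e = if e = x0 then a else if e = m then 1 - a else 0)
    (p : V → ℝ)
    (hp : ∀ e, e ≠ m → p e = a * π e) (hpm : p m = 1 - a) :
    (∑ e, q e * Real.log (q e / p e)) = -a * Real.log (π x0) ∧
    (∀ w s t : ℝ, 1 ≤ w → 0 < s → s < t → t ≤ 1 → a = 1 - s ^ w / t ^ w →
      (∑ e, q e * Real.log (q e / p e)) =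
        -(1 - s ^ w / t ^ w) * Real.log (π x0)) := by
  have hkl := sum_mul_log_div_eq_of_masked x0 m hxm a π q p hq hp hpm
  exact ⟨hkl, fun w s t _ _ _ _ ha => ha ▸ hkl⟩

/-- Per-token diffusion KL term of the bond-dependent masked diffusion model:
if `q` puts mass `a` on the clean token `x0` and `1 - a` on the mask `m`, and
`p` puts mass `a·π(e)` on each token `e ≠ m` and `1 - a` on `m`, where `π` is a
probability vector with `π(m) = 0` and `π(x0) > 0`, then
`KL(q ‖ p) = ∑ e, q(e)·log(q(e)/p(e)) = −a·log π(x0)`. In particular, for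
`a = 1 - s^w/t^w`, the KL term equals `−(1 − s^w/t^w)·log π(x0)`. -/
theorem stmt_4 {V : Type*} [Fintype V] [DecidableEq V] (x0 m : V) (hxm : x0 ≠ m)
    (a : ℝ) (ha0 : 0 < a) (ha1 : a < 1)
    (π : V → ℝ) (hπ0 : ∀ e, 0 ≤ π e) (hπ1 : ∀ e, π e ≤ 1)
    (hπm : π m = 0) (hπx0 : 0 < π x0) (hπsum : ∑ e, π e = 1)
    (q : V → ℝ)
    (hq : ∀ e, q e = if e = x0 then a else if e = m then 1 - a else 0)
    (p : V → ℝ)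
    (hp : ∀ e, e ≠ m → p e = a * π e) (hpm : p m = 1 - a) :
    (∑ e, q e * Real.log (q e / p e)) = -a * Real.log (π x0) ∧
    (∀ w s t : ℝ, 1 ≤ w → 0 < s → s < t → t ≤ 1 → a = 1 - s ^ w / t ^ w →
      (∑ e, q e * Real.log (q e / p e)) =
        -(1 - s ^ w / t ^ w) * Real.log (π x0)) :=
  stmt_4_general x0 m hxm a π q hq p hp hpm
end

section
/- Let t ∈ (0,1], let w ≥ 1 be real, and let p ∈ (0,1]. Then the sequence T ↦ T·(1 − ((t − 1/T)^w)/t^w)·(−log p), indexed by natural numbers T, converges as T → ∞ to (w/t)·(−log p). Consequently, T times the per-token diffusion KL term −(1 − s^w/t^w)·log p with s = t − 1/T converges to −(w/t)·log p: the continuous-time negative log-loss of a masked token whose masking schedule has exponent w is weighted by w/t (in particular by 1/t for non-bond tokens, where w = 1). -/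
/-- Continuous-time limit of the per-token diffusion KL term: for `t ∈ (0,1]`,
`w ≥ 1` and `p ∈ (0,1]`, `T·(1 − (t − 1/T)^w/t^w)·(−log p) → (w/t)·(−log p)`
as `T → ∞`; the continuous-time negative log-loss of a masked token with
masking-schedule exponent `w` is weighted by `w/t`. -/
theorem stmt_7 (t w p : ℝ) (ht0 : 0 < t) (ht1 : t ≤ 1) (hw : 1 ≤ w)
    (hp0 : 0 < p) (hp1 : p ≤ 1) :
    Filter.Tendsto
      (fun T : ℕ => (T : ℝ) * (1 - (t - 1 / (T : ℝ)) ^ w / t ^ w) * (-Real.log p))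
      Filter.atTop (nhds ((w / t) * (-Real.log p))) := by
  have htw : (0:ℝ) < t ^ w := Real.rpow_pos_of_pos ht0 w
  have hF : HasDerivAt (fun x : ℝ => x ^ w) (w * t ^ (w - 1)) t := by
    simpa [mul_comm] using Real.hasDerivAt_rpow_const (p := w) (Or.inl ht0.ne')
  have hslope := hasDerivAt_iff_tendsto_slope.mp hF
  have hx : Filter.Tendsto (fun T : ℕ => t - 1 / (T:ℝ)) Filter.atTop (nhdsWithin t {t}ᶜ) := by
    rw [tendsto_nhdsWithin_iff]
    constructor
    · have h0 : Filter.Tendsto (fun T : ℕ => 1 / (T:ℝ)) Filter.atTop (nhds 0) :=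
        tendsto_one_div_atTop_nhds_zero_nat
      simpa using (tendsto_const_nhds (x := t) (f := Filter.atTop (α := ℕ))).sub h0
    · filter_upwards [Filter.eventually_gt_atTop 0] with T hT
      have h1 : (0:ℝ) < 1 / (T:ℝ) := by positivity
      simp only [Set.mem_compl_iff, Set.mem_singleton_iff]
      intro h
      nlinarith
  have h1 := (hslope.comp hx).mul_const ((-Real.log p) / t ^ w)
  have hlim : w * t ^ (w - 1) * (-Real.log p / t ^ w) = w / t * (-Real.log p) := by
    rw [Real.rpow_sub ht0, Real.rpow_one]
    field_simp
  rw [← hlim]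
  refine Filter.Tendsto.congr' ?_ h1
  filter_upwards [Filter.eventually_gt_atTop 0] with T hT
  have hT0 : (0:ℝ) < (T:ℝ) := by exact_mod_cast hT
  simp only [Function.comp, slope_def_field]
  have hb : t ^ w ≠ 0 := htw.ne'
  have hTne : (T:ℝ) ≠ 0 := hT0.ne'
  rw [show t - 1 / (T:ℝ) - t = -(1/(T:ℝ)) by ring]
  rw [div_neg, div_div_eq_mul_div, div_one]
  field_simp
  ring
end

section
/- Let L be a finite index set of masked sequence positions, let B ⊆ L be the set of peptide-bond positions, let t ∈ (0,1], let w > 1 be real, and let p : L → (0,1] assign to each position the model's predicted probability of the true token. For each position ℓ set w_ℓ = w if ℓ ∈ B and w_ℓ = 1 otherwise. Then the sequence T ↦ T·∑_{ℓ∈L} (1 − ((t − 1/T)^{w_ℓ})/t^{w_ℓ})·(−log p(ℓ)), indexed by natural numbers T, converges as T → ∞ to ∑_{ℓ∈B} (w/t)·(−log p(ℓ)) + ∑_{ℓ∈L\B} (1/t)·(−log p(ℓ)). That is, the bond-dependent continuous-time NELBO at time t decomposes into the sum of negative log-losses of peptide-bond tokens weighted by w/t and of non-bond tokens weighted by 1/t.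 -/
open Filter Real

/-- Key limit: `T * (1 - (t - 1/T)^c / t^c) → c / t` as `T → ∞`. -/
lemma aux_limit (t c : ℝ) (ht : 0 < t) :
    Tendsto (fun T : ℕ => (T : ℝ) * (1 - (t - 1 / (T : ℝ)) ^ c / t ^ c))
      atTop (nhds (c / t)) := by
  have htc : (0:ℝ) < t ^ c := Real.rpow_pos_of_pos ht c
  -- derivative of h ↦ (t - h)^c at 0
  have hd0 : HasDerivAt (fun h : ℝ => t - h) (-1) 0 := by
    exact (hasDerivAt_id (0:ℝ)).const_sub t
  have hd : HasDerivAt (fun h : ℝ => (t - h) ^ c) (-(c * t ^ (c - 1))) 0 := by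
    have := hd0.rpow_const (p := c) (by left; simp [ht.ne'])
    simpa [mul_comm, mul_left_comm] using this
  have hslope := hasDerivAt_iff_tendsto_slope.mp hd
  -- 1/T → 0 within {0}ᶜ
  have h1T : Tendsto (fun T : ℕ => 1 / (T : ℝ)) atTop (nhdsWithin 0 {0}ᶜ) := by
    apply tendsto_nhdsWithin_of_tendsto_nhds_of_eventually_within
    · exact tendsto_one_div_atTop_nhds_zero_nat
    · filter_upwards [eventually_gt_atTop 0] with T hT
      have : (0:ℝ) < (T:ℝ) := by exact_mod_cast hT
      simp [one_div, inv_ne_zero this.ne']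
  have hcomp : Tendsto (fun T : ℕ => slope (fun h : ℝ => (t - h) ^ c) 0 (1 / (T:ℝ)))
      atTop (nhds (-(c * t ^ (c - 1)))) := hslope.comp h1T
  have hfin : Tendsto (fun T : ℕ =>
      -(slope (fun h : ℝ => (t - h) ^ c) 0 (1 / (T:ℝ))) / t ^ c) atTop
      (nhds (-(-(c * t ^ (c - 1))) / t ^ c)) := (hcomp.neg).div_const _
  have hval : -(-(c * t ^ (c - 1))) / t ^ c = c / t := by
    rw [neg_neg, mul_div_assoc]
    congr 1
    rw [← Real.rpow_sub ht, ← Real.rpow_neg_one t]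
    norm_num
  rw [hval] at hfin
  refine hfin.congr fun T => ?_
  rcases Nat.eq_zero_or_pos T with h | h
  · subst h; simp [slope]
  · have hT : (0:ℝ) < (T:ℝ) := by exact_mod_cast h
    have hne : (1 : ℝ) / (T:ℝ) ≠ 0 := by positivity
    rw [slope_def_field]
    field_simp
    ring

/-- Bond-dependent continuous-time NELBO at a fixed time `t` (Proposition 2.2):
the limit of `T` times the sum over masked positions of the per-position KL
terms decomposes into negative log-losses of peptide-bond positions (in `B`)
weighted by `w/t` and of non-bond positions weighted by `1/t`. -/
theorem stmt_8 {L : Type*} [Fintype L] [DecidableEq L] (B : Finset L)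
    (t w : ℝ) (ht0 : 0 < t) (ht1 : t ≤ 1) (hw : 1 < w)
    (p : L → ℝ) (hp0 : ∀ ℓ, 0 < p ℓ) (hp1 : ∀ ℓ, p ℓ ≤ 1)
    (wl : L → ℝ) (hwl : ∀ ℓ, wl ℓ = if ℓ ∈ B then w else 1) :
    Filter.Tendsto
      (fun T : ℕ => (T : ℝ) *
        ∑ ℓ, (1 - (t - 1 / (T : ℝ)) ^ wl ℓ / t ^ wl ℓ) * (-Real.log (p ℓ)))
      Filter.atTop
      (nhds ((∑ ℓ ∈ B, (w / t) * (-Real.log (p ℓ))) +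
        ∑ ℓ ∈ Bᶜ, (1 / t) * (-Real.log (p ℓ)))) := by
  have key : Filter.Tendsto
      (fun T : ℕ => ∑ ℓ, (T : ℝ) *
        ((1 - (t - 1 / (T : ℝ)) ^ wl ℓ / t ^ wl ℓ) * (-Real.log (p ℓ))))
      Filter.atTop
      (nhds (∑ ℓ, (wl ℓ / t) * (-Real.log (p ℓ)))) := by
    apply tendsto_finset_sum
    intro ℓ _
    have := (aux_limit t (wl ℓ) ht0).mul_const (-Real.log (p ℓ))
    refine this.congr fun T => by ring
  have hsum : (∑ ℓ, (wl ℓ / t) * (-Real.log (p ℓ))) =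
      (∑ ℓ ∈ B, (w / t) * (-Real.log (p ℓ))) +
        ∑ ℓ ∈ Bᶜ, (1 / t) * (-Real.log (p ℓ)) := by
    rw [← Finset.sum_add_sum_compl B]
    congr 1
    · exact Finset.sum_congr rfl fun ℓ hℓ => by rw [hwl ℓ, if_pos hℓ]
    · refine Finset.sum_congr rfl fun ℓ hℓ => ?_
      rw [hwl ℓ, if_neg (Finset.mem_compl.mp hℓ)]
  rw [← hsum]
  refine key.congr fun T => ?_
  rw [Finset.mul_sum]
end
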